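/- arXiv:2407.11542 — 5 statements merged into one kernel-verified Lean document; each statement's English description precedes it below -/
import Mathlib

section
/- For any set of T unit-norm vectors v_1,...,v_T in R^d with T > d, the mutual coherence M = max_{i≠j} |⟨v_i, v_j⟩| satisfies M ≥ sqrt((T-d)/(d(T-1))) (the Welch bound). -/
/-!
Write the vectors in an orthonormal basis as the rows of a `T × d` matrix `A`. The Gram matrix
`A Aᵀ` and the frame matrix `Aᵀ A` have the same trace `∑ ‖vᵢ‖² = T` and the same sum of squared
entries, the frame potential `∑ᵢⱼ ⟪vᵢ, vⱼ⟫²`. Cauchy–Schwarz on the `d` diagonal entries of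
`Aᵀ A` gives `T² ≤ d ∑ᵢⱼ ⟪vᵢ, vⱼ⟫²`, while the coherence bound gives
`∑ᵢⱼ ⟪vᵢ, vⱼ⟫² ≤ T + T (T - 1) M²`.
-/

open RealInnerProductSpace

open Finset Matrix

namespace Matrix

variable {m n R : Type*} [Fintype m] [Fintype n]

theorem sum_sq_eq_trace_mul_transpose [CommSemiring R] (A : Matrix m n R) :
    ∑ i, ∑ j, A i j ^ 2 = trace (A * Aᵀ) := by
  simp [trace, mul_apply, sq]

theorem sum_sq_mul_transpose_eq_sum_sq_transpose_mul [CommSemiring R] (A : Matrix m n R) :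
    ∑ i, ∑ j, (A * Aᵀ) i j ^ 2 = ∑ k, ∑ l, (Aᵀ * A) k l ^ 2 := by
  simp only [sum_sq_eq_trace_mul_transpose, transpose_mul, transpose_transpose, Matrix.mul_assoc]
  rw [trace_mul_comm]
  simp only [Matrix.mul_assoc]

theorem sq_trace_le_card_mul_sum_sq (A : Matrix n n ℝ) :
    A.trace ^ 2 ≤ Fintype.card n * ∑ i, ∑ j, A i j ^ 2 :=
  calc A.trace ^ 2 ≤ Fintype.card n * ∑ i, A i i ^ 2 := sq_sum_le_card_mul_sum_sq
    _ ≤ Fintype.card n * ∑ i, ∑ j, A i j ^ 2 := by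
      gcongr with i
      exact single_le_sum (fun j _ => sq_nonneg (A i j)) (mem_univ i)

end Matrix

section FramePotential

variable {ι E : Type*} [Fintype ι] [NormedAddCommGroup E] [InnerProductSpace ℝ E]

theorem sq_sum_norm_sq_le_finrank_mul_sum_inner_sq [FiniteDimensional ℝ E] (v : ι → E) :
    (∑ i, ‖v i‖ ^ 2) ^ 2 ≤ Module.finrank ℝ E * ∑ i, ∑ j, ⟪v i, v j⟫ ^ 2 := by
  let b := stdOrthonormalBasis ℝ E
  let A : Matrix ι (Fin (Module.finrank ℝ E)) ℝ := .of fun i k => ⟪v i, b k⟫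
  have gram : A * Aᵀ = .of fun i j => ⟪v i, v j⟫ := by
    ext i j
    simp [A, Matrix.mul_apply, ← b.sum_inner_mul_inner (v i) (v j), real_inner_comm (v j)]
  have trace_frame : (Aᵀ * A).trace = ∑ i, ‖v i‖ ^ 2 := by
    rw [trace_mul_comm, gram]
    simp [trace]
  calc (∑ i, ‖v i‖ ^ 2) ^ 2 = (Aᵀ * A).trace ^ 2 := by rw [trace_frame]
    _ ≤ Module.finrank ℝ E * ∑ k, ∑ l, (Aᵀ * A) k l ^ 2 := by
      simpa using (Aᵀ * A).sq_trace_le_card_mul_sum_sq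
    _ = Module.finrank ℝ E * ∑ i, ∑ j, ⟪v i, v j⟫ ^ 2 := by
      rw [← Matrix.sum_sq_mul_transpose_eq_sum_sq_transpose_mul, gram]
      rfl

theorem sum_inner_sq_le_of_abs_inner_le {v : ι → E} (hv : ∀ i, ‖v i‖ = 1) {M : ℝ}
    (hM : ∀ i j, i ≠ j → |⟪v i, v j⟫| ≤ M) :
    ∑ i, ∑ j, ⟪v i, v j⟫ ^ 2 ≤ Fintype.card ι * (1 + (Fintype.card ι - 1) * M ^ 2) := by
  classical
  have row_bound (i : ι) : ∑ j, ⟪v i, v j⟫ ^ 2 ≤ 1 + (Fintype.card ι - 1) * M ^ 2 := by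
    rw [← add_sum_erase _ _ (mem_univ i), real_inner_self_eq_norm_sq, hv i, one_pow, one_pow]
    gcongr
    calc ∑ j ∈ univ.erase i, ⟪v i, v j⟫ ^ 2 ≤ ∑ j ∈ univ.erase i, M ^ 2 := by
          refine sum_le_sum fun j hj => ?_
          rw [← sq_abs]
          exact pow_le_pow_left₀ (abs_nonneg _) (hM i j (ne_of_mem_erase hj).symm) 2
      _ = (Fintype.card ι - 1) * M ^ 2 := by
          rw [sum_const, card_erase_of_mem (mem_univ i), card_univ, nsmul_eq_mul,
            Nat.cast_pred (Fintype.card_pos_iff.mpr ⟨i⟩)]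
  calc ∑ i, ∑ j, ⟪v i, v j⟫ ^ 2 ≤ ∑ _i : ι, (1 + (Fintype.card ι - 1) * M ^ 2) :=
        sum_le_sum fun i _ => row_bound i
    _ = _ := by rw [sum_const, card_univ, nsmul_eq_mul]

theorem card_sub_finrank_le_of_abs_inner_le [Nonempty ι] [FiniteDimensional ℝ E] {v : ι → E}
    (hv : ∀ i, ‖v i‖ = 1) {M : ℝ} (hM : ∀ i j, i ≠ j → |⟪v i, v j⟫| ≤ M) :
    Fintype.card ι - Module.finrank ℝ E ≤ Module.finrank ℝ E * (Fintype.card ι - 1) * M ^ 2 := by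
  set T : ℝ := (Fintype.card ι : ℝ)
  set d : ℝ := (Module.finrank ℝ E : ℝ)
  have frame_bound := sq_sum_norm_sq_le_finrank_mul_sum_inner_sq v
  simp only [hv, one_pow, sum_const, card_univ, nsmul_eq_mul, mul_one] at frame_bound
  have : T * T ≤ T * (d * (1 + (T - 1) * M ^ 2)) :=
    calc T * T = T ^ 2 := (sq T).symm
      _ ≤ d * ∑ i, ∑ j, ⟪v i, v j⟫ ^ 2 := frame_bound
      _ ≤ d * (T * (1 + (T - 1) * M ^ 2)) := by
        gcongr
        exact sum_inner_sq_le_of_abs_inner_le hv hM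
      _ = T * (d * (1 + (T - 1) * M ^ 2)) := by ring
  have hT : 0 < T := Nat.cast_pos.mpr Fintype.card_pos
  linarith [le_of_mul_le_mul_left this hT]

end FramePotential

/-- Welch bound: any `T` unit-norm vectors in `ℝ^d` with `T > d ≥ 1` have mutual
coherence at least `√((T-d)/(d(T-1)))`. -/
theorem welch_bound (T d : ℕ) (hd : 1 ≤ d) (hTd : d < T)
    (v : Fin T → EuclideanSpace ℝ (Fin d)) (hv : ∀ i, ‖v i‖ = 1)
    (M : ℝ) (hM : ∀ i j : Fin T, i ≠ j → |⟪v i, v j⟫| ≤ M) :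
    Real.sqrt (((T : ℝ) - d) / (d * ((T : ℝ) - 1))) ≤ M := by
  have hT : (2 : ℝ) ≤ T := by exact_mod_cast (by omega : 2 ≤ T)
  have hM0 : 0 ≤ M :=
    (abs_nonneg _).trans (hM ⟨0, by omega⟩ ⟨1, by omega⟩ (by simp [Fin.ext_iff]))
  have : Nonempty (Fin T) := ⟨⟨0, by omega⟩⟩
  have welch := card_sub_finrank_le_of_abs_inner_le hv hM
  rw [Fintype.card_fin, finrank_euclideanSpace_fin] at welch
  refine Real.sqrt_le_iff.mpr ⟨hM0, div_le_of_le_mul₀ ?_ (sq_nonneg M) (by linarith)⟩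
  have : (0 : ℝ) ≤ T - 1 := by linarith
  positivity
end

section
/- With tagged embeddings e_t = ẽ_t + ẽ_cnt (ẽ_t orthonormal, ẽ_cnt = Σ_s ẽ_s), for a sequence x of length L in which token x_ℓ occurs k times, the quantity ⟨ x̄'_ℓ, ẽ_cnt/(T+1) ⟩ equals k + 1 + L(T+2), where x̄'_ℓ = e_{x_ℓ} + Σ_{m=1}^L ⟨e_{x_m}, e_{x_ℓ}⟩ e_{x_m}. -/
open RealInnerProductSpace Finset

theorem tagged_embedding_count_readout (T d L : ℕ)
    (etil : Fin T → EuclideanSpace ℝ (Fin d)) (he : Orthonormal ℝ etil)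
    (ecnt : EuclideanSpace ℝ (Fin d)) (hcnt : ecnt = ∑ s, etil s)
    (e : Fin T → EuclideanSpace ℝ (Fin d)) (hdef : ∀ t, e t = etil t + ecnt)
    (x : Fin L → Fin T) (ℓ : Fin L)
    (k : ℕ) (hk : k = (univ.filter fun m => x m = x ℓ).card)
    (xmix : EuclideanSpace ℝ (Fin d))
    (hmix : xmix = e (x ℓ) + ∑ m, ⟪e (x m), e (x ℓ)⟫ • e (x m)) :
    ⟪xmix, ((T : ℝ) + 1)⁻¹ • ecnt⟫ = (k : ℝ) + 1 + L * ((T : ℝ) + 2) := by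
  have horth := orthonormal_iff_ite.mp he
  have hec : ∀ t, ⟪etil t, ecnt⟫ = 1 := by
    intro t
    rw [hcnt, inner_sum]
    simp [horth]
  have hcc : ⟪ecnt, ecnt⟫ = (T : ℝ) := by
    nth_rewrite 1 [hcnt]
    rw [sum_inner]
    simp [hec]
  have hee : ∀ s t, ⟪e s, e t⟫ = (if s = t then 1 else 0) + (T : ℝ) + 2 := by
    intro s t
    have h1 : ⟪ecnt, etil t⟫ = 1 := by rw [real_inner_comm]; exact hec t
    rw [hdef, hdef, inner_add_left, inner_add_right, inner_add_right, horth, hec, hcc, h1]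
    ring
  have heC : ∀ t, ⟪e t, ecnt⟫ = (T : ℝ) + 1 := by
    intro t
    rw [hdef, inner_add_left, hec, hcc]
    ring
  have hsum : ∑ m : Fin L, ((if x m = x ℓ then (1:ℝ) else 0) + (T : ℝ) + 2)
      = (k : ℝ) + L * ((T : ℝ) + 2) := by
    rw [Finset.sum_add_distrib, Finset.sum_add_distrib, Finset.sum_boole, hk]
    simp [mul_comm]
    ring
  have hT : (T : ℝ) + 1 ≠ 0 := by positivity
  rw [hmix, real_inner_smul_right, inner_add_left, sum_inner, heC]
  have : ∀ m : Fin L, ⟪⟪e (x m), e (x ℓ)⟫ • e (x m), ecnt⟫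
      = ((if x m = x ℓ then (1:ℝ) else 0) + (T : ℝ) + 2) * ((T : ℝ) + 1) := by
    intro m
    rw [real_inner_smul_left, heC, hee]
  rw [Finset.sum_congr rfl fun m _ => this m, ← Finset.sum_mul, hsum]
  field_simp
  ring
end

section
/- Define W_2, b_2 ∈ R^L by (W_2)_1 = -1 + 1/(L+1), (b_2)_1 = 0, and recursively (W_2)_j = -1 + j/(L+1), (b_2)_j = ((W_2)_{j-1} - (W_2)_j)(j - 1/2) + (b_2)_{j-1} for j = 2,...,L. Then for every integer y with 1 ≤ y ≤ L, the index maximizing c_i(y) = (W_2)_i · y + (b_2)_i over i ∈ {1,...,L} is exactly y. -/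
/-- The recursively defined affine readout `c_i(y) = (W₂)_i y + (b₂)_i`
has its unique argmax over `i ∈ {1,…,L}` at `i = y`, for every integer
`1 ≤ y ≤ L`. -/
theorem affine_readout_argmax (L : ℕ) (hL : 1 ≤ L)
    (W b : ℕ → ℝ)
    (hW : ∀ j, 1 ≤ j → j ≤ L → W j = -1 + (j : ℝ) / ((L : ℝ) + 1))
    (hb1 : b 1 = 0)
    (hbrec : ∀ j, 2 ≤ j → j ≤ L →
      b j = (W (j - 1) - W j) * ((j : ℝ) - 1 / 2) + b (j - 1)) :
    ∀ y, 1 ≤ y → y ≤ L → ∀ i, 1 ≤ i → i ≤ L → i ≠ y →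
      W i * (y : ℝ) + b i < W y * (y : ℝ) + b y := by
  intro y hy1 hyL i hi1 hiL hiy
  have hL1 : (0:ℝ) < (L:ℝ) + 1 := by positivity
  have step : ∀ j, 2 ≤ j → j ≤ L →
      W j * (y:ℝ) + b j
        = W (j-1) * (y:ℝ) + b (j-1) + ((y:ℝ) - (j:ℝ) + 1/2)/((L:ℝ)+1) := by
    intro j h2 hjL
    have hcast : ((j - 1 : ℕ) : ℝ) = (j:ℝ) - 1 := by
      rw [Nat.cast_sub (by omega : 1 ≤ j), Nat.cast_one]
    rw [hbrec j h2 hjL, hW j (by omega) hjL, hW (j-1) (by omega) (by omega), hcast]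
    field_simp
    ring
  have inc : ∀ d, ∀ m, 1 ≤ m → m + (d+1) = y →
      W m * (y:ℝ) + b m < W y * (y:ℝ) + b y := by
    intro d
    induction d with
    | zero =>
      intro m hm hmy
      have heq := step y (by omega) hyL
      have hy1' : y - 1 = m := by omega
      rw [heq, hy1']
      have hpos : (0:ℝ) < ((y:ℝ) - (y:ℝ) + 1/2)/((L:ℝ)+1) := by
        apply div_pos _ hL1; linarith
      linarith
    | succ d ih =>
      intro m hm hmy
      have h1 : W m * (y:ℝ) + b m < W (m+1) * (y:ℝ) + b (m+1) := by
        have heq := step (m+1) (by omega) (by omega)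
        have hm1 : m + 1 - 1 = m := by omega
        rw [heq, hm1]
        have hle : ((m:ℕ):ℝ) + 1 ≤ (y:ℝ) := by exact_mod_cast (by omega : m + 1 ≤ y)
        have hpos : (0:ℝ) < ((y:ℝ) - ((m+1:ℕ):ℝ) + 1/2)/((L:ℝ)+1) := by
          apply div_pos _ hL1
          push_cast
          linarith
        linarith
      exact lt_trans h1 (ih (m+1) (by omega) (by omega))
  have dec : ∀ d, ∀ m, m = y + (d+1) → m ≤ L →
      W m * (y:ℝ) + b m < W y * (y:ℝ) + b y := by
    intro d
    induction d with
    | zero =>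
      intro m hmy hmL
      have heq := step m (by omega) hmL
      have hm1 : m - 1 = y := by omega
      rw [heq, hm1]
      have hle : (y:ℝ) + 1 ≤ (m:ℝ) := by exact_mod_cast (by omega : y + 1 ≤ m)
      have hneg : ((y:ℝ) - (m:ℝ) + 1/2)/((L:ℝ)+1) < 0 := by
        apply div_neg_of_neg_of_pos _ hL1; linarith
      linarith
    | succ d ih =>
      intro m hmy hmL
      have heq := step m (by omega) hmL
      have hle : (y:ℝ) + 1 ≤ (m:ℝ) := by exact_mod_cast (by omega : y + 1 ≤ m)
      have hneg : ((y:ℝ) - (m:ℝ) + 1/2)/((L:ℝ)+1) < 0 := by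
        apply div_neg_of_neg_of_pos _ hL1; linarith
      have h2 := ih (m-1) (by omega) (by omega)
      rw [heq]
      linarith
  rcases lt_or_gt_of_ne hiy with h | h
  · exact inc (y - i - 1) i hi1 (by omega)
  · exact dec (i - y - 1) i (by omega) hiL
end

section
/- Suppose for each count k ∈ {1,...,L} the value γ(k) lies in an interval [γ_low(k), γ_up(k)] with γ_up(k) < γ_low(k+1) for all k < L. Then there exist affine functions c_i(γ) = w_i γ + b_i, i = 1,...,L, such that for every k and every γ ∈ [γ_low(k), γ_up(k)], argmax_i c_i(γ) = k. -/
/-- If the value intervals for consecutive counts are disjoint and ordered,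
then an affine readout followed by argmax recovers the count. -/
theorem affine_readout_exists (L : ℕ) (hL : 1 ≤ L)
    (γlow γup : ℕ → ℝ)
    (hle : ∀ k, 1 ≤ k → k ≤ L → γlow k ≤ γup k)
    (hsep : ∀ k, 1 ≤ k → k < L → γup k < γlow (k + 1)) :
    ∃ w b : ℕ → ℝ, ∀ k, 1 ≤ k → k ≤ L →
      ∀ γ : ℝ, γlow k ≤ γ → γ ≤ γup k →
        ∀ i, 1 ≤ i → i ≤ L → i ≠ k →
          w i * γ + b i < w k * γ + b k := by
  -- midpoints between consecutive intervals
  set t : ℕ → ℝ := fun j => (γup j + γlow (j + 1)) / 2 with ht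
  set S : ℕ → ℝ := fun m => ∑ j ∈ Finset.Ico 1 m, t j with hS
  -- chain inequality
  have chain : ∀ j k, 1 ≤ j → j < k → k ≤ L → γup j < γlow k := by
    intro j k hj hjk hkL
    induction k with
    | zero => omega
    | succ m ih =>
      rcases Nat.lt_succ_iff_lt_or_eq.mp hjk with h | h
      · have hmL : m ≤ L := le_of_lt (Nat.lt_of_lt_of_le (Nat.lt_succ_self m) (Nat.succ_le_of_lt (Nat.lt_of_lt_of_le (Nat.lt_succ_self m) hkL)))
        have h1 : γup j < γlow m := ih h (by omega)
        have h2 : γlow m ≤ γup m := hle m (by omega) (by omega)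
        have h3 : γup m < γlow (m + 1) := hsep m (by omega) (by omega)
        linarith
      · subst h; exact hsep j hj (by omega)
  have htlow : ∀ j, 1 ≤ j → j < L → t j < γlow (j + 1) := by
    intro j h1 h2
    have := hsep j h1 h2
    simp only [ht]; linarith
  have htup : ∀ j, 1 ≤ j → j < L → γup j < t j := by
    intro j h1 h2
    have := hsep j h1 h2
    simp only [ht]; linarith
  refine ⟨fun m => (m : ℝ), fun m => -(S m), ?_⟩
  intro k hk1 hkL γ hγl hγu i hi1 hiL hik
  rcases lt_or_gt_of_ne hik with hlt | hgt
  · -- i < k : show positivity of ∑_{j ∈ Ico i k} (γ - t j)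
    have hpos : 0 < ∑ j ∈ Finset.Ico i k, (γ - t j) := by
      apply Finset.sum_pos
      · intro j hj
        rw [Finset.mem_Ico] at hj
        have hjL : j < L := lt_of_lt_of_le hj.2 hkL
        have h1 : t j < γlow (j + 1) := htlow j (le_trans hi1 hj.1) hjL
        have h2 : γlow (j + 1) ≤ γ := by
          rcases eq_or_lt_of_le (Nat.succ_le_of_lt hj.2) with h | h
          · have hk : k = j + 1 := by omega
            rw [hk] at hγl; exact hγl
          · have := chain (j + 1) k (by omega) h hkL
            have := hle (j + 1) (by omega) (by omega)
            linarith
        linarith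
      · exact ⟨i, Finset.mem_Ico.mpr ⟨le_refl i, hlt⟩⟩
    have hsum : ∑ j ∈ Finset.Ico i k, (γ - t j)
        = ((k : ℝ) * γ - S k) - ((i : ℝ) * γ - S i) := by
      rw [Finset.sum_sub_distrib, Finset.sum_const, Nat.card_Ico, nsmul_eq_mul,
        Nat.cast_sub (le_of_lt hlt)]
      have hsplit : S i + ∑ j ∈ Finset.Ico i k, t j = S k :=
        Finset.sum_Ico_consecutive t hi1 (le_of_lt hlt)
      linear_combination -hsplit
    rw [hsum] at hpos
    show (i : ℝ) * γ + -S i < (k : ℝ) * γ + -S k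
    linarith
  · -- i > k : show positivity of ∑_{j ∈ Ico k i} (t j - γ)
    have hpos : 0 < ∑ j ∈ Finset.Ico k i, (t j - γ) := by
      apply Finset.sum_pos
      · intro j hj
        rw [Finset.mem_Ico] at hj
        have hjL : j < L := lt_of_lt_of_le hj.2 hiL
        have h1 : γup j < t j := htup j (le_trans hk1 hj.1) hjL
        have h2 : γ ≤ γup j := by
          rcases eq_or_lt_of_le hj.1 with h | h
          · rw [← h]; exact hγu
          · have := chain k j hk1 h (le_of_lt hjL)
            have := hle j (by omega) (by omega)
            linarith
        linarith
      · exact ⟨k, Finset.mem_Ico.mpr ⟨le_refl k, hgt⟩⟩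
    have hsum : ∑ j ∈ Finset.Ico k i, (t j - γ)
        = ((k : ℝ) * γ - S k) - ((i : ℝ) * γ - S i) := by
      rw [Finset.sum_sub_distrib, Finset.sum_const, Nat.card_Ico, nsmul_eq_mul,
        Nat.cast_sub (le_of_lt hgt)]
      have hsplit : S k + ∑ j ∈ Finset.Ico k i, t j = S i :=
        Finset.sum_Ico_consecutive t hk1 (le_of_lt hgt)
      linear_combination hsplit
    rw [hsum] at hpos
    show (i : ℝ) * γ + -S i < (k : ℝ) * γ + -S k
    linarith
end

section
/- For d' ≥ 1, let bin(t) ∈ {0,1}^{d'} be the binary representation of t ∈ {1,...,2^{d'}-1}, and set u_t = bin(t)/‖bin(t)‖. Then ⟨u_t, u_t⟩ = 1 and for t ≠ s, ⟨u_t, u_s⟩ ≤ sqrt(1 - 1/d') < 1, with the maximum overlap sqrt((d'-1)/d') attained by the pair t = 2^{d'}-1, s = 2^{d'}-2. -/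
/-!
The inner product of two 0/1 vectors counts their common ones, so the overlap of the normalized
embeddings of `t ≠ s` is `c / √(a b)`, where `a`, `b` are the numbers of set bits of `t`, `s`
and `c` the number of common ones. Distinct `t, s < 2^{d'}` have distinct bit sets, so one of
them, say that of `t`, is not contained in the other: then `c ≤ a - 1` and `c ≤ b`, whence
`c² ≤ (1 - 1/a) a b ≤ (1 - 1/d') a b`. Equality holds for the nested bit sets of `2^{d'} - 1`
(all bits) and `2^{d'} - 2` (all bits but the lowest).
-/

open RealInnerProductSpace

/-- The 0/1 binary-representation vector of `t` in `ℝ^{d'}`. -/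
noncomputable def binVec (d' t : ℕ) : EuclideanSpace ℝ (Fin d') :=
  WithLp.toLp 2 fun i => if Nat.testBit t (i : ℕ) then 1 else 0

/-- The normalized binary embedding of `t`. -/
noncomputable def binEmb (d' t : ℕ) : EuclideanSpace ℝ (Fin d') :=
  ‖binVec d' t‖⁻¹ • binVec d' t

open Finset

theorem Finset.card_inter_sq_le_of_ne {α : Type*} [Fintype α] [DecidableEq α] {A B : Finset α}
    (hA : A.Nonempty) (hAB : A ≠ B) :
    (#(A ∩ B) : ℝ) ^ 2 ≤ (1 - 1 / Fintype.card α) * (#A * #B) := by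
  wlog hAB' : ¬A ⊆ B generalizing A B
  · have hBA : ¬B ⊆ A := fun hBA => hAB (subset_antisymm (not_not.mp hAB') hBA)
    rw [inter_comm, mul_comm (#A : ℝ)]
    exact this (hA.mono (not_not.mp hAB')) hAB.symm hBA
  have hc : (#(A ∩ B) : ℝ) + 1 ≤ #A := mod_cast
    card_lt_card (ssubset_of_subset_of_ne inter_subset_left (mt inter_eq_left.mp hAB'))
  have hcB : (#(A ∩ B) : ℝ) ≤ #B := mod_cast card_le_card inter_subset_right
  have hA_pos : (0 : ℝ) < #A := mod_cast hA.card_pos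
  have hA_le : (#A : ℝ) ≤ Fintype.card α := mod_cast card_le_univ A
  calc (#(A ∩ B) : ℝ) ^ 2 ≤ (#A - 1) * #B := by nlinarith
    _ = (1 - 1 / #A) * (#A * #B) := by field_simp
    _ ≤ (1 - 1 / Fintype.card α) * (#A * #B) := by gcongr

def bitset (d' t : ℕ) : Finset (Fin d') := {i | t.testBit i}

theorem bitset_injOn (d' : ℕ) : Set.InjOn (bitset d') (Set.Iio (2 ^ d')) := by
  intro t ht s hs hts
  refine Nat.eq_of_testBit_eq fun i => ?_
  by_cases hi : i < d'
  · simpa [bitset] using congr_arg (⟨i, hi⟩ ∈ ·) hts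
  · have h2 : 2 ^ d' ≤ 2 ^ i := Nat.pow_le_pow_right two_pos (not_lt.mp hi)
    rw [Nat.testBit_lt_two_pow (lt_of_lt_of_le ht h2),
      Nat.testBit_lt_two_pow (lt_of_lt_of_le hs h2)]

theorem bitset_zero (d' : ℕ) : bitset d' 0 = ∅ := by simp [bitset]

theorem bitset_nonempty {d' t : ℕ} (h0 : t ≠ 0) (ht : t < 2 ^ d') :
    (bitset d' t).Nonempty := by
  rw [nonempty_iff_ne_empty, ← bitset_zero d']
  exact fun h => h0 (bitset_injOn d' ht (Nat.two_pow_pos d') h)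

theorem bitset_two_pow_sub_one (d' : ℕ) : bitset d' (2 ^ d' - 1) = univ := by
  ext i; simp [bitset]

theorem bitset_two_pow_sub_two {d' : ℕ} (hd : 0 < d') :
    bitset d' (2 ^ d' - 2) = univ.erase ⟨0, hd⟩ := by
  ext i
  simp [bitset, Nat.testBit_two_pow_sub_succ (x := 1) (Nat.one_lt_two_pow hd.ne'), Fin.ext_iff,
    ← Bool.not_eq_true, Nat.testBit_one_eq_true_iff_self_eq_zero]

theorem card_bitset_two_pow_sub_two {d' : ℕ} (hd : 0 < d') :
    #(bitset d' (2 ^ d' - 2)) = d' - 1 := by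
  simp [bitset_two_pow_sub_two hd]

theorem inner_binVec (d' t s : ℕ) :
    ⟪binVec d' t, binVec d' s⟫ = #(bitset d' t ∩ bitset d' s) := by
  simp [binVec, bitset, PiLp.inner_apply, ← ite_and, Finset.sum_boole, Finset.filter_and]

theorem norm_binVec (d' t : ℕ) : ‖binVec d' t‖ = √(#(bitset d' t) : ℝ) := by
  rw [norm_eq_sqrt_real_inner, inner_binVec, inter_self]

theorem inner_binEmb (d' t s : ℕ) : ⟪binEmb d' t, binEmb d' s⟫
    = #(bitset d' t ∩ bitset d' s) / (√(#(bitset d' t) : ℝ) * √(#(bitset d' s) : ℝ)) := by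
  rw [binEmb, binEmb, real_inner_smul_left, real_inner_smul_right, inner_binVec,
    norm_binVec, norm_binVec]
  field_simp

theorem inner_binEmb_self {d' t : ℕ} (h0 : t ≠ 0) (ht : t < 2 ^ d') :
    ⟪binEmb d' t, binEmb d' t⟫ = 1 := by
  have hpos : (0 : ℝ) < #(bitset d' t) := mod_cast (bitset_nonempty h0 ht).card_pos
  rw [inner_binEmb, inter_self, Real.mul_self_sqrt hpos.le, div_self hpos.ne']

theorem inner_binEmb_le_sqrt {d' t s : ℕ} (ht0 : t ≠ 0) (hs0 : s ≠ 0) (ht : t < 2 ^ d')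
    (hs : s < 2 ^ d') (hts : t ≠ s) : ⟪binEmb d' t, binEmb d' s⟫ ≤ √(1 - 1 / d') := by
  have hA := bitset_nonempty ht0 ht
  have hAB : bitset d' t ≠ bitset d' s := fun h => hts (bitset_injOn d' ht hs h)
  have hab : (0 : ℝ) < #(bitset d' t) * #(bitset d' s) := by
    have := (bitset_nonempty hs0 hs).card_pos
    have := hA.card_pos
    positivity
  rw [inner_binEmb]
  refine Real.le_sqrt_of_sq_le ?_
  rw [div_pow, mul_pow, Real.sq_sqrt (Nat.cast_nonneg _), Real.sq_sqrt (Nat.cast_nonneg _),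
    div_le_iff₀ hab]
  simpa using card_inter_sq_le_of_ne hA hAB

theorem inner_binEmb_of_subset {d' t s : ℕ} (h : bitset d' t ⊆ bitset d' s) :
    ⟪binEmb d' t, binEmb d' s⟫ = √(#(bitset d' t) / #(bitset d' s)) := by
  rw [inner_binEmb, inter_eq_left.mpr h, Real.sqrt_div' _ (Nat.cast_nonneg _), ← div_div,
    Real.div_sqrt]

/-- Normalized binary embeddings: unit norm, pairwise overlap at most
`√(1 - 1/d') < 1`, with the maximal overlap `√((d'-1)/d')` attained by the
pair `t = 2^{d'}-1`, `s = 2^{d'}-2`. -/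
theorem binary_embedding_overlaps (d' : ℕ) (hd : 2 ≤ d') :
    (∀ t : ℕ, 1 ≤ t → t ≤ 2 ^ d' - 1 → ⟪binEmb d' t, binEmb d' t⟫ = 1) ∧
    (∀ t s : ℕ, 1 ≤ t → t ≤ 2 ^ d' - 1 → 1 ≤ s → s ≤ 2 ^ d' - 1 → t ≠ s →
      ⟪binEmb d' t, binEmb d' s⟫ ≤ Real.sqrt (1 - 1 / (d' : ℝ))) ∧
    Real.sqrt (1 - 1 / (d' : ℝ)) < 1 ∧
    ⟪binEmb d' (2 ^ d' - 1), binEmb d' (2 ^ d' - 2)⟫ =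
      Real.sqrt (((d' : ℝ) - 1) / (d' : ℝ)) := by
  have hpow := Nat.one_le_two_pow (n := d')
  have hd0 : (0 : ℝ) < d' := mod_cast (by omega : 0 < d')
  refine ⟨fun t ht0 ht => inner_binEmb_self (by omega) (by omega),
    fun t s ht0 ht hs0 hs hts =>
      inner_binEmb_le_sqrt (by omega) (by omega) (by omega) (by omega) hts,
    (Real.sqrt_lt' one_pos).mpr (by simpa using hd0), ?_⟩
  have hsub : bitset d' (2 ^ d' - 2) ⊆ bitset d' (2 ^ d' - 1) := by
    simp [bitset_two_pow_sub_one]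
  rw [real_inner_comm, inner_binEmb_of_subset hsub, card_bitset_two_pow_sub_two (by omega),
    bitset_two_pow_sub_one, card_univ, Fintype.card_fin, Nat.cast_sub (by omega), Nat.cast_one]
end
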